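/- arXiv:0910.4621 — 6 statements merged into one kernel-verified Lean document; each statement's English description precedes it below -/
import Mathlib

section
/- For every c ≥ 0 and every r > 0 there exist unique reals β₁, β₂, β₃ with β₁ < −θ−c < β₂ < 0 < β₃ such that (σ²/2)(z−β₁)(z−β₂)(z−β₃) = (θ+c+z)(ψ_c(z) − r) for all real z ≠ −θ−c. -/
/-!
Multiplying by `θ + c + z` clears the pole of `ψ_c`, so `(θ+c+z)(ψ_c(z) − r)` extends to
a real cubic `P` with leading coefficient `σ²/2 > 0`. It takes the value `λθ > 0` at the
pole `−θ−c` and the value `−(θ+c)r < 0` at `0`, so by the intermediate value theorem it has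
a root in each of `(−∞, −θ−c)`, `(−θ−c, 0)` and `(0, ∞)`. Three distinct roots of a cubic
determine it, which gives the factorisation; conversely every root of `P` is one of these
three, which gives uniqueness.
-/

open Filter Polynomial

def cubic (k p q s : ℝ) : ℝ → ℝ := fun z => k * z ^ 3 + p * z ^ 2 + q * z + s

section Cubic

variable {k p q s : ℝ}

theorem continuous_cubic : Continuous (cubic k p q s) := by
  unfold cubic; fun_prop

theorem tendsto_cubic_atTop (hk : 0 < k) : Tendsto (cubic k p q s) atTop atTop := by
  have hpoly : cubic k p q s = fun z => (C k * X ^ 3 + C p * X ^ 2 + C q * X + C s).eval z := by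
    ext z; simp [cubic]
  rw [hpoly]
  exact tendsto_atTop_of_leadingCoeff_nonneg _
    (by rw [degree_cubic hk.ne']; norm_num)
    (by rw [leadingCoeff_cubic hk.ne']; exact hk.le)

theorem tendsto_cubic_atBot (hk : 0 < k) : Tendsto (cubic k p q s) atBot atBot := by
  have hneg : cubic k p q s = fun z => -cubic k (-p) q (-s) (-z) := by
    ext z; simp only [cubic]; ring
  rw [hneg]
  exact tendsto_neg_atTop_atBot.comp ((tendsto_cubic_atTop hk).comp tendsto_neg_atBot_atTop)

theorem quadratic_coeffs_eq_zero_of_three_roots {x y w : ℝ} (hxy : x ≠ y) (hyw : y ≠ w)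
    (hxw : x ≠ w) (hx : p * x ^ 2 + q * x + s = 0) (hy : p * y ^ 2 + q * y + s = 0)
    (hw : p * w ^ 2 + q * w + s = 0) : p = 0 ∧ q = 0 ∧ s = 0 := by
  have hxy' : p * (x + y) + q = 0 :=
    (mul_eq_zero.mp (by linear_combination hx - hy : (x - y) * (p * (x + y) + q) = 0)).resolve_left
      (sub_ne_zero.mpr hxy)
  have hyw' : p * (y + w) + q = 0 :=
    (mul_eq_zero.mp (by linear_combination hy - hw : (y - w) * (p * (y + w) + q) = 0)).resolve_left
      (sub_ne_zero.mpr hyw)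
  have hp : p = 0 :=
    (mul_eq_zero.mp (by linear_combination hxy' - hyw' : p * (x - w) = 0)).resolve_right
      (sub_ne_zero.mpr hxw)
  have hq : q = 0 := by linear_combination hxy' - (x + y) * hp
  exact ⟨hp, hq, by linear_combination hx - x ^ 2 * hp - x * hq⟩

theorem cubic_eq_mul_of_three_roots {x y w : ℝ} (hxy : x ≠ y) (hyw : y ≠ w) (hxw : x ≠ w)
    (hx : cubic k p q s x = 0) (hy : cubic k p q s y = 0) (hw : cubic k p q s w = 0) (z : ℝ) :
    cubic k p q s z = k * (z - x) * (z - y) * (z - w) := by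
  unfold cubic at *
  -- `cubic − k(z−x)(z−y)(z−w)` is the quadratic below, which vanishes at `x`, `y` and `w`.
  obtain ⟨hp, hq, hs⟩ := quadratic_coeffs_eq_zero_of_three_roots
    (p := p + k * (x + y + w)) (q := q - k * (x * y + x * w + y * w)) (s := s + k * (x * y * w))
    hxy hyw hxw (by linear_combination hx) (by linear_combination hy) (by linear_combination hw)
  linear_combination z ^ 2 * hp + z * hq + hs

theorem exists_three_roots_of_cubic {a b : ℝ} (hk : 0 < k) (hab : a < b)
    (ha : 0 < cubic k p q s a) (hb : cubic k p q s b < 0) :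
    ∃ x y w, x < a ∧ a < y ∧ y < b ∧ b < w ∧
      cubic k p q s x = 0 ∧ cubic k p q s y = 0 ∧ cubic k p q s w = 0 := by
  obtain ⟨m, hm, hma⟩ :=
    (((tendsto_cubic_atBot (p := p) (q := q) (s := s) hk).eventually_lt_atBot 0).and
      (eventually_lt_atBot a)).exists
  obtain ⟨M, hM, hMb⟩ :=
    (((tendsto_cubic_atTop (p := p) (q := q) (s := s) hk).eventually_gt_atTop 0).and
      (eventually_gt_atTop b)).exists
  have hcont {u v : ℝ} : ContinuousOn (cubic k p q s) (Set.Icc u v) :=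
    continuous_cubic.continuousOn
  obtain ⟨x, ⟨-, hxa⟩, hx⟩ := intermediate_value_Ioo hma.le hcont ⟨hm, ha⟩
  obtain ⟨y, ⟨hay, hyb⟩, hy⟩ := intermediate_value_Ioo' hab.le hcont ⟨hb, ha⟩
  obtain ⟨w, ⟨hbw, -⟩, hw⟩ := intermediate_value_Ioo hMb.le hcont ⟨hb, hM⟩
  exact ⟨x, y, w, hxa, hay, hyb, hbw, hx, hy, hw⟩

theorem existsUnique_factorization_of_cubic {a b : ℝ} (hk : 0 < k) (hab : a < b)
    (ha : 0 < cubic k p q s a) (hb : cubic k p q s b < 0) :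
    ∃! β : ℝ × ℝ × ℝ, β.1 < a ∧ a < β.2.1 ∧ β.2.1 < b ∧ b < β.2.2 ∧
      ∀ z, k * (z - β.1) * (z - β.2.1) * (z - β.2.2) = cubic k p q s z := by
  obtain ⟨x, y, w, hxa, hay, hyb, hbw, hx, hy, hw⟩ := exists_three_roots_of_cubic hk hab ha hb
  have hfac := cubic_eq_mul_of_three_roots (by linarith) (by linarith) (by linarith) hx hy hw
  have hroot : ∀ u, cubic k p q s u = 0 → u = x ∨ u = y ∨ u = w := by
    intro u hu
    simpa [hfac, hk.ne', sub_eq_zero, or_assoc] using hu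
  refine ⟨(x, y, w), ⟨hxa, hay, hyb, hbw, fun z => (hfac z).symm⟩, ?_⟩
  rintro ⟨x', y', w'⟩ ⟨hxa', hay', hyb', hbw', hfac'⟩
  have root_of_factor (u : ℝ) (hu : u = x' ∨ u = y' ∨ u = w') : cubic k p q s u = 0 := by
    rw [← hfac']; rcases hu with rfl | rfl | rfl <;> ring
  have hx' := hroot x' (root_of_factor x' (by simp))
  have hy' := hroot y' (root_of_factor y' (by simp))
  have hw' := hroot w' (root_of_factor w' (by simp))
  simp only at hxa' hay' hyb' hbw'
  obtain ⟨rfl, rfl, rfl⟩ : x' = x ∧ y' = y ∧ w' = w := by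
    refine ⟨?_, ?_, ?_⟩
    · rcases hx' with h | h | h <;> [exact h; linarith; linarith]
    · rcases hy' with h | h | h <;> [linarith; exact h; linarith]
    · rcases hw' with h | h | h <;> [linarith; linarith; exact h]
  rfl

end Cubic

/-- For every `c ≥ 0` and every `r > 0` there exist unique reals
`β₁ < −θ−c < β₂ < 0 < β₃` with
`(σ²/2)(z−β₁)(z−β₂)(z−β₃) = (θ+c+z)(ψ_c(z) − r)` for all `z ≠ −θ−c`. -/
theorem stmt_1
    (σ lam θ μ : ℝ) (hσ : 0 < σ) (hlam : 0 < lam) (hθ : 0 < θ)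
    (ψ : ℝ → ℝ)
    (hψ : ∀ z : ℝ, z ≠ -θ → ψ z = σ^2/2 * z^2 + μ * z + lam * (θ/(θ+z) - 1))
    (c : ℝ) (hc : 0 ≤ c) (r : ℝ) (hr : 0 < r) :
    ∃! b : ℝ × ℝ × ℝ,
      b.1 < -θ - c ∧ -θ - c < b.2.1 ∧ b.2.1 < 0 ∧ 0 < b.2.2 ∧
      ∀ z : ℝ, z ≠ -θ - c →
        σ^2/2 * (z - b.1) * (z - b.2.1) * (z - b.2.2)
          = (θ + c + z) * ((ψ (z + c) - ψ c) - r) := by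
  set k := σ ^ 2 / 2
  set t := θ + c
  set e := k * c ^ 2 + μ * c - lam - (ψ c + r)
  -- `P z = (t + z) * (k (z + c)² + μ (z + c) − λ − ψ c − r) + λθ`, expanded in powers of `z`.
  set P := cubic k (2 * k * c + μ + k * t) ((2 * k * c + μ) * t + e) (t * e + lam * θ)
  have ht : 0 < t := by positivity
  have hP : ∀ z, z ≠ -θ - c → (θ + c + z) * ((ψ (z + c) - ψ c) - r) = P z := by
    intro z hz
    have hz' : θ + (z + c) ≠ 0 := fun h => hz (by linarith)
    rw [hψ (z + c) fun h => hz (by linarith)]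
    simp only [P, cubic, e, t]
    field_simp
    ring
  have hPpole : 0 < P (-θ - c) := by
    have : P (-θ - c) = lam * θ := by simp only [P, cubic, t]; ring
    rw [this]; positivity
  have hPzero : P 0 < 0 := by
    rw [← hP 0 (by linarith), zero_add, sub_self, zero_sub, add_zero]
    exact mul_neg_of_pos_of_neg ht (neg_neg_of_pos hr)
  refine (existsUnique_congr fun β => ?_).mp
    (existsUnique_factorization_of_cubic (by positivity) (by linarith) hPpole hPzero)
  refine and_congr_right fun _ => and_congr_right fun _ => and_congr_right fun _ =>
    and_congr_right fun _ => ⟨fun h z hz => by rw [h z, hP z hz], fun h => ?_⟩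
  -- Both sides are polynomials, so agreeing off the pole they agree everywhere.
  exact congrFun <| Continuous.ext_on (dense_compl_singleton (-θ - c)) (by fun_prop)
    continuous_cubic fun z hz => (h z hz).trans (hP z hz)
end

section
/- For every c ≥ 0 there exist reals β₁, β₂, β₃ with β₁ < −θ−c < β₂ ≤ 0 ≤ β₃ such that (σ²/2)(z−β₁)(z−β₂)(z−β₃) = (θ+c+z)·ψ_c(z) for all real z ≠ −θ−c; moreover β₂ < 0 = β₃ if ψ_c′(0) > 0, β₂ = 0 < β₃ if ψ_c′(0) < 0, and β₂ = β₃ = 0 if ψ_c′(0) = 0. -/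
/-!
Clearing the denominator gives `(θ + c + z) ψ_c(z) = z Q(z)` with `Q` a quadratic of leading
coefficient `σ²/2` and `Q(-θ-c) = -λθ/(θ+c) < 0`, so `Q = (σ²/2)(z - r₁)(z - r₂)` with
`r₁ < -θ-c < r₂`. Since `(θ+c) ψ_c'(0) = Q(0) = (σ²/2) r₁ r₂` and `r₁ < 0`, the sign of `r₂` is
opposite to that of `ψ_c'(0)`; the roots `β₂ ≤ β₃` are `min r₂ 0` and `max r₂ 0`.
-/

theorem exists_factorization_of_quadratic_neg {a b k x₀ : ℝ} (ha : 0 < a)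
    (hx₀ : a * x₀ ^ 2 + b * x₀ + k < 0) :
    ∃ r₁ r₂ : ℝ, r₁ < x₀ ∧ x₀ < r₂ ∧ ∀ z, a * z ^ 2 + b * z + k = a * (z - r₁) * (z - r₂) := by
  have hdiscrim : 0 ≤ discrim a b k := by
    rw [discrim]; nlinarith [sq_nonneg (2 * a * x₀ + b)]
  set s := Real.sqrt (discrim a b k)
  have hs : s ^ 2 = discrim a b k := Real.sq_sqrt hdiscrim
  have hfactor : ∀ z, a * z ^ 2 + b * z + k
      = a * (z - (-b - s) / (2 * a)) * (z - (-b + s) / (2 * a)) := by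
    intro z
    field_simp
    rw [discrim] at hs
    linear_combination hs
  have hle : (-b - s) / (2 * a) ≤ (-b + s) / (2 * a) := by
    gcongr; linarith [Real.sqrt_nonneg (discrim a b k)]
  rw [hfactor, mul_assoc] at hx₀
  rcases mul_neg_iff.mp (neg_of_mul_neg_right hx₀ ha.le) with ⟨h₁, h₂⟩ | ⟨h₁, h₂⟩
  · exact ⟨_, _, sub_pos.mp h₁, sub_neg.mp h₂, hfactor⟩
  · linarith

section LaplaceExponent

variable {σ lam θ μ : ℝ} {ψ : ℝ → ℝ}
  (hψ : ∀ z : ℝ, z ≠ -θ → ψ z = σ^2/2 * z^2 + μ * z + lam * (θ/(θ+z) - 1))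
include hψ

theorem hasDerivAt_laplaceExponent {x : ℝ} (hx : x ≠ -θ) :
    HasDerivAt ψ (σ^2 * x + μ - lam * θ / (θ + x)^2) x := by
  have hθx : θ + x ≠ 0 := fun h => hx (by linarith)
  have hformula : HasDerivAt (fun z => σ^2/2 * z^2 + μ * z + lam * (θ/(θ+z) - 1))
      (σ^2 * x + μ - lam * θ / (θ + x)^2) x := by
    have hfrac : HasDerivAt (fun z => θ / (θ + z)) (-θ / (θ + x)^2) x := by
      simpa [div_eq_mul_inv] using (((hasDerivAt_id x).const_add θ).inv hθx).const_mul θ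
    refine ((((hasDerivAt_pow 2 x).const_mul (σ^2/2)).add ((hasDerivAt_id x).const_mul μ)).add
      ((hfrac.sub_const 1).const_mul lam)).congr_deriv ?_
    push_cast
    ring
  refine hformula.congr_of_eventuallyEq ?_
  filter_upwards [isOpen_ne.mem_nhds hx] with z hz using hψ z hz

theorem hasDerivAt_laplaceExponent_shift {c : ℝ} (hc : c ≠ -θ) :
    HasDerivAt (fun z => ψ (z + c) - ψ c) (σ^2 * c + μ - lam * θ / (θ + c)^2) 0 := by
  have h := (hasDerivAt_laplaceExponent hψ (x := 0 + c) (by rwa [zero_add])).comp_add_const 0 c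
  rw [zero_add] at h
  exact h.sub_const (ψ c)

theorem mul_laplaceExponent_shift_eq {c z : ℝ} (hc : c ≠ -θ) (hz : z ≠ -θ - c) :
    (θ + c + z) * (ψ (z + c) - ψ c)
      = z * ((θ + c + z) * (σ^2/2 * (z + 2 * c) + μ) - lam * θ / (θ + c)) := by
  have hθc : θ + c ≠ 0 := fun h => hc (by linarith)
  have hθcz : θ + c + z ≠ 0 := fun h => hz (by linarith)
  rw [hψ _ (fun h => hz (by linarith)), hψ c hc, show θ + (z + c) = θ + c + z by ring]
  field_simp
  ring

end LaplaceExponent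

/-- For every `c ≥ 0` there exist reals `β₁ < −θ−c < β₂ ≤ 0 ≤ β₃` such that
`(σ²/2)(z−β₁)(z−β₂)(z−β₃) = (θ+c+z)·ψ_c(z)` for all `z ≠ −θ−c`; moreover
`β₂ < 0 = β₃` if `ψ_c′(0) > 0`, `β₂ = 0 < β₃` if `ψ_c′(0) < 0`, and
`β₂ = β₃ = 0` if `ψ_c′(0) = 0`. -/
theorem stmt_2
    (σ lam θ μ : ℝ) (hσ : 0 < σ) (hlam : 0 < lam) (hθ : 0 < θ)
    (ψ : ℝ → ℝ)
    (hψ : ∀ z : ℝ, z ≠ -θ → ψ z = σ^2/2 * z^2 + μ * z + lam * (θ/(θ+z) - 1))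
    (c : ℝ) (hc : 0 ≤ c) :
    ∃ b₁ b₂ b₃ : ℝ,
      b₁ < -θ - c ∧ -θ - c < b₂ ∧ b₂ ≤ 0 ∧ 0 ≤ b₃ ∧
      (∀ z : ℝ, z ≠ -θ - c →
        σ^2/2 * (z - b₁) * (z - b₂) * (z - b₃) = (θ + c + z) * (ψ (z + c) - ψ c)) ∧
      (0 < deriv (fun z => ψ (z + c) - ψ c) 0 → b₂ < 0 ∧ b₃ = 0) ∧
      (deriv (fun z => ψ (z + c) - ψ c) 0 < 0 → b₂ = 0 ∧ 0 < b₃) ∧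
      (deriv (fun z => ψ (z + c) - ψ c) 0 = 0 → b₂ = 0 ∧ b₃ = 0) := by
  have hT : 0 < θ + c := by linarith
  have hcθ : c ≠ -θ := by linarith
  obtain ⟨r₁, r₂, hr₁, hr₂, hQ⟩ := exists_factorization_of_quadratic_neg
    (a := σ^2/2) (x₀ := -θ - c) (b := σ^2/2 * (θ + 3 * c) + μ)
    (k := (θ + c) * (σ^2 * c + μ) - lam * θ / (θ + c))
    (by positivity) (by field_simp; nlinarith [mul_pos hlam hθ])
  have hderiv : σ^2 * c + μ - lam * θ / (θ + c)^2 = σ^2/2 * r₁ / (θ + c) * r₂ := by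
    have hQ₀ := hQ 0
    field_simp at hQ₀ ⊢
    linear_combination hQ₀
  have hcoeff : σ^2/2 * r₁ / (θ + c) < 0 :=
    div_neg_of_neg_of_pos (mul_neg_of_pos_of_neg (by positivity) (by linarith)) hT
  rw [(hasDerivAt_laplaceExponent_shift hψ hcθ).deriv, hderiv]
  refine ⟨r₁, min r₂ 0, max r₂ 0, hr₁, lt_min hr₂ (by linarith), min_le_right _ _,
    le_max_right _ _, fun z hz => ?_, fun hd => ?_, fun hd => ?_, fun hd => ?_⟩
  · rw [mul_laplaceExponent_shift_eq hψ hcθ hz]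
    linear_combination (σ^2/2 * (z - r₁)) * (-z * min_add_max r₂ 0 + min_mul_max r₂ 0) - z * hQ z
  · have hr₂ := neg_of_mul_pos_right hd hcoeff.le
    exact ⟨min_lt_of_left_lt hr₂, max_eq_right hr₂.le⟩
  · have hr₂ := pos_of_mul_neg_right hd hcoeff.le
    exact ⟨min_eq_right hr₂.le, lt_max_of_lt_left hr₂⟩
  · simp [(mul_eq_zero.mp hd).resolve_left hcoeff.ne]
end

section
/- Assume q > 0 and μ = q − σ²/2 + λ/(θ+1), so that ψ(1) = q. Set A = θ/2 + q/σ² + λ/(σ²(θ+1)). Then A² > 2qθ/σ², and, defining β₁ = −A − √(A² − 2qθ/σ²), β₂ = −A + √(A² − 2qθ/σ²) and β₃ = 1, one has β₁ < −θ < β₂ < 0 < β₃ and (σ²/2)(z−β₁)(z−β₂)(z−1) = (θ+z)(ψ(z) − q) for all real z ≠ −θ. -/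
/-!
Multiplying `ψ(z) − q` by `θ + z` clears the denominator of the jump part and leaves a cubic
with leading coefficient `σ²/2` that vanishes at `z = 1` (because `ψ(1) = q`); the remaining
factor is the monic quadratic `p(z) = z² + 2Az + 2qθ/σ²`, whose roots are `β₁, β₂`. Since
`p(−θ) = −2θλ/(σ²(θ+1)) < 0`, the point `−θ` lies strictly between the roots (which also
shows that they are real and distinct), and since `A > 0` and `p(0) > 0` both roots are negative.
-/

namespace Real

variable {A c : ℝ}

theorem mul_sub_neg_sub_sqrt_sub_neg_add_sqrt (h : c ≤ A ^ 2) (z : ℝ) :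
    (z - (-A - √(A ^ 2 - c))) * (z - (-A + √(A ^ 2 - c))) = z ^ 2 + 2 * A * z + c := by
  linear_combination -(sq_sqrt (sub_nonneg.mpr h))

theorem between_roots_of_quadratic_neg {t : ℝ} (ht : t ^ 2 + 2 * A * t + c < 0) :
    c < A ^ 2 ∧ -A - √(A ^ 2 - c) < t ∧ t < -A + √(A ^ 2 - c) := by
  have hsq : |t + A| ^ 2 < A ^ 2 - c := by rw [sq_abs]; linarith
  have habs : |t + A| < √(A ^ 2 - c) := (lt_sqrt (abs_nonneg _)).mpr hsq
  obtain ⟨hlo, hhi⟩ := abs_lt.mp habs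
  exact ⟨by nlinarith [sq_nonneg (t + A)], by linarith, by linarith⟩

theorem neg_add_sqrt_sq_sub_neg (hA : 0 < A) (hc : 0 < c) : -A + √(A ^ 2 - c) < 0 := by
  have : √(A ^ 2 - c) < A := (sqrt_lt' hA).mpr (by linarith)
  linarith

end Real

theorem jumpDiffusion_factorization {σ lam θ q z : ℝ} (hσ : σ ≠ 0) (hθ : θ + 1 ≠ 0)
    (hz : θ + z ≠ 0) :
    σ ^ 2 / 2 * (z ^ 2 + 2 * (θ / 2 + q / σ ^ 2 + lam / (σ ^ 2 * (θ + 1))) * z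
        + 2 * q * θ / σ ^ 2) * (z - 1)
      = (θ + z) * (σ ^ 2 / 2 * z ^ 2 + (q - σ ^ 2 / 2 + lam / (θ + 1)) * z
        + lam * (θ / (θ + z) - 1) - q) := by
  field_simp
  ring

/-- Assume `q > 0` and `μ = q − σ²/2 + λ/(θ+1)` (so `ψ(1) = q`). With
`A = θ/2 + q/σ² + λ/(σ²(θ+1))` one has `A² > 2qθ/σ²`, and setting
`β₁ = −A − √(A² − 2qθ/σ²)`, `β₂ = −A + √(A² − 2qθ/σ²)`, `β₃ = 1`, one has
`β₁ < −θ < β₂ < 0 < β₃` and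
`(σ²/2)(z−β₁)(z−β₂)(z−1) = (θ+z)(ψ(z) − q)` for all `z ≠ −θ`. -/
theorem stmt_3
    (σ lam θ μ q : ℝ) (hσ : 0 < σ) (hlam : 0 < lam) (hθ : 0 < θ) (hq : 0 < q)
    (hμ : μ = q - σ^2/2 + lam/(θ+1))
    (ψ : ℝ → ℝ)
    (hψ : ∀ z : ℝ, z ≠ -θ → ψ z = σ^2/2 * z^2 + μ * z + lam * (θ/(θ+z) - 1))
    (A : ℝ) (hA : A = θ/2 + q/σ^2 + lam/(σ^2 * (θ+1)))
    (β₁ β₂ β₃ : ℝ)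
    (hβ₁ : β₁ = -A - Real.sqrt (A^2 - 2*q*θ/σ^2))
    (hβ₂ : β₂ = -A + Real.sqrt (A^2 - 2*q*θ/σ^2))
    (hβ₃ : β₃ = 1) :
    2*q*θ/σ^2 < A^2 ∧
    β₁ < -θ ∧ -θ < β₂ ∧ β₂ < 0 ∧ 0 < β₃ ∧
    ∀ z : ℝ, z ≠ -θ →
      σ^2/2 * (z - β₁) * (z - β₂) * (z - 1) = (θ + z) * (ψ z - q) := by
  have hθ1 : θ + 1 ≠ 0 := by positivity
  have hneg : (-θ) ^ 2 + 2 * A * (-θ) + 2 * q * θ / σ ^ 2 < 0 := by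
    have hval : (-θ) ^ 2 + 2 * A * (-θ) + 2 * q * θ / σ ^ 2
        = -(2 * θ * (lam / (σ ^ 2 * (θ + 1)))) := by rw [hA]; ring
    rw [hval, neg_lt_zero]
    positivity
  obtain ⟨hdisc, hβ₁θ, hθβ₂⟩ := Real.between_roots_of_quadratic_neg hneg
  have hβ₂neg : β₂ < 0 :=
    hβ₂ ▸ Real.neg_add_sqrt_sq_sub_neg (by rw [hA]; positivity) (by positivity)
  refine ⟨hdisc, hβ₁ ▸ hβ₁θ, hβ₂ ▸ hθβ₂, hβ₂neg, hβ₃ ▸ one_pos, fun z hz => ?_⟩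
  have hz' : θ + z ≠ 0 := fun h => hz (by linarith)
  rw [mul_assoc (σ ^ 2 / 2), hβ₁, hβ₂, Real.mul_sub_neg_sub_sqrt_sub_neg_add_sqrt hdisc.le,
    hψ z hz, hμ, hA]
  exact jumpDiffusion_factorization hσ.ne' hθ1 hz'
end

section
/- For every real β > β₃ the scale function W^{(r)}_c(x) = Σ_{i=1}^3 C_i e^{β_i x} satisfies the Laplace transform identity ∫₀^∞ e^{−βx} Σ_{i=1}^3 C_i e^{β_i x} dx = 1/(ψ_c(β) − r). -/
/-!
Termwise, `∫₀^∞ e^{-βx} e^{β_i x} dx = 1/(β - β_i)`, so the integral is `Σ C_i/(β - β_i)`. The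
constants `C_i` are the partial-fraction coefficients of `2(θ+c+z)/(σ² ∏ (z - β_i))`, and by the
defining factorisation of the cubic this rational function is `1/(ψ_c(z) - r)`. The factorisation
may be used at `z = β` because `β > β₃ > 0 > -θ-c`; here `β₃ > 0` comes from evaluating the
factorisation at `z = 0`, which gives `(σ²/2) β₁β₂β₃ = (θ+c) r > 0`.
-/

open MeasureTheory Real Set

theorem integral_exp_neg_mul_mul_sum_exp {ι : Type*} (s : Finset ι) (C b : ι → ℝ) {β : ℝ}
    (hb : ∀ i ∈ s, b i < β) :
    ∫ x in Ioi (0:ℝ), exp (-β * x) * ∑ i ∈ s, C i * exp (b i * x)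
      = ∑ i ∈ s, C i / (β - b i) := by
  have hterm : ∀ i, ∀ x : ℝ, exp (-β * x) * (C i * exp (b i * x))
      = C i * exp ((b i - β) * x) := by
    intro i x
    rw [mul_left_comm, ← exp_add]
    ring_nf
  simp_rw [Finset.mul_sum, hterm]
  rw [integral_finsetSum s fun i hi =>
    (integrableOn_exp_mul_Ioi (sub_neg.2 (hb i hi)) 0).const_mul (C i)]
  refine Finset.sum_congr rfl fun i hi => ?_
  rw [integral_const_mul, integral_exp_mul_Ioi (sub_neg.2 (hb i hi)), mul_zero, exp_zero,
    neg_div, ← div_neg, neg_sub, mul_one_div]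

theorem pos_of_lt_of_lt_of_mul_mul_pos {a b c : ℝ} (hab : a < b) (hbc : b < c)
    (h : 0 < a * b * c) : 0 < c := by
  by_contra! hc
  have hab_pos : 0 < a * b := mul_pos_of_neg_of_neg (by linarith) (by linarith)
  nlinarith

theorem partial_fractions_linear_div_cubic {k t β β₁ β₂ β₃ : ℝ} (hk : k ≠ 0)
    (h₁ : β ≠ β₁) (h₂ : β ≠ β₂) (h₃ : β ≠ β₃) (h₁₂ : β₁ ≠ β₂) (h₁₃ : β₁ ≠ β₃) (h₂₃ : β₂ ≠ β₃) :
    2 * (t + β₁) / (k * ((β₂ - β₁) * (β₃ - β₁))) / (β - β₁)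
      + 2 * (t + β₂) / (k * ((β₁ - β₂) * (β₃ - β₂))) / (β - β₂)
      + 2 * (t + β₃) / (k * ((β₁ - β₃) * (β₂ - β₃))) / (β - β₃)
      = (t + β) / (k / 2 * (β - β₁) * (β - β₂) * (β - β₃)) := by
  have := sub_ne_zero.2 h₁; have := sub_ne_zero.2 h₂; have := sub_ne_zero.2 h₃
  have := sub_ne_zero.2 h₁₂; have := sub_ne_zero.2 h₁₃; have := sub_ne_zero.2 h₂₃
  have := sub_ne_zero.2 h₁₂.symm; have := sub_ne_zero.2 h₁₃.symm; have := sub_ne_zero.2 h₂₃.symm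
  field_simp
  ring

theorem stmt_5_general
    (σ θ : ℝ) (hσ : 0 < σ) (hθ : 0 < θ)
    (ψ : ℝ → ℝ)
    (c r : ℝ) (hc : 0 ≤ c) (hr : 0 < r)
    (β₁ β₂ β₃ : ℝ) (h12 : β₁ < β₂) (h23 : β₂ < β₃)
    (hcubic : ∀ z : ℝ, z ≠ -θ - c →
      σ^2/2 * (z - β₁) * (z - β₂) * (z - β₃)
        = (θ + c + z) * ((ψ (z + c) - ψ c) - r))
    (C₁ C₂ C₃ : ℝ)
    (hC₁ : C₁ = 2 * (θ + c + β₁) / (σ^2 * ((β₂ - β₁) * (β₃ - β₁))))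
    (hC₂ : C₂ = 2 * (θ + c + β₂) / (σ^2 * ((β₁ - β₂) * (β₃ - β₂))))
    (hC₃ : C₃ = 2 * (θ + c + β₃) / (σ^2 * ((β₁ - β₃) * (β₂ - β₃))))
    (β : ℝ) (hβ : β₃ < β) :
    ∫ x in Set.Ioi (0:ℝ),
        Real.exp (-β * x) *
          (C₁ * Real.exp (β₁ * x) + C₂ * Real.exp (β₂ * x) + C₃ * Real.exp (β₃ * x))
      = 1 / ((ψ (β + c) - ψ c) - r) := by
  have hθc : 0 < θ + c := by linarith
  have hβ₃ : 0 < β₃ := by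
    have h0 := hcubic 0 (by linarith)
    rw [zero_add, sub_self] at h0
    refine pos_of_lt_of_lt_of_mul_mul_pos h12 h23 (pos_of_mul_pos_right (a := σ ^ 2 / 2) ?_
      (by positivity))
    linear_combination h0 + mul_pos hθc hr
  have hβc : θ + c + β ≠ 0 := by linarith
  have hlaplace := integral_exp_neg_mul_mul_sum_exp Finset.univ ![C₁, C₂, C₃] ![β₁, β₂, β₃]
    (β := β) (by intro i _; fin_cases i <;> simp <;> linarith)
  simp only [Fin.sum_univ_three, Matrix.cons_val_zero, Matrix.cons_val_one, Matrix.cons_val_two,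
    Matrix.tail_cons, Matrix.head_cons] at hlaplace
  rw [hlaplace, hC₁, hC₂, hC₃, partial_fractions_linear_div_cubic (by positivity) (by linarith)
    (by linarith) (by linarith) (by linarith) (by linarith) (by linarith),
    hcubic β (by contrapose! hβc; linarith), div_mul_cancel_left₀ hβc, one_div]

/-- Laplace transform of the scale function: for every `β > β₃`,
`∫₀^∞ e^{−βx} Σ_{i=1}^3 C_i e^{β_i x} dx = 1/(ψ_c(β) − r)`. -/
theorem stmt_5
    (σ lam θ μ : ℝ) (hσ : 0 < σ) (hlam : 0 < lam) (hθ : 0 < θ)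
    (ψ : ℝ → ℝ)
    (hψ : ∀ z : ℝ, z ≠ -θ → ψ z = σ^2/2 * z^2 + μ * z + lam * (θ/(θ+z) - 1))
    (c r : ℝ) (hc : 0 ≤ c) (hr : 0 < r)
    (β₁ β₂ β₃ : ℝ) (h12 : β₁ < β₂) (h23 : β₂ < β₃)
    (hcubic : ∀ z : ℝ, z ≠ -θ - c →
      σ^2/2 * (z - β₁) * (z - β₂) * (z - β₃)
        = (θ + c + z) * ((ψ (z + c) - ψ c) - r))
    (C₁ C₂ C₃ : ℝ)
    (hC₁ : C₁ = 2 * (θ + c + β₁) / (σ^2 * ((β₂ - β₁) * (β₃ - β₁))))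
    (hC₂ : C₂ = 2 * (θ + c + β₂) / (σ^2 * ((β₁ - β₂) * (β₃ - β₂))))
    (hC₃ : C₃ = 2 * (θ + c + β₃) / (σ^2 * ((β₁ - β₃) * (β₂ - β₃))))
    (β : ℝ) (hβ : β₃ < β) :
    ∫ x in Set.Ioi (0:ℝ),
        Real.exp (-β * x) *
          (C₁ * Real.exp (β₁ * x) + C₂ * Real.exp (β₂ * x) + C₃ * Real.exp (β₃ * x))
      = 1 / ((ψ (β + c) - ψ c) - r) :=
  stmt_5_general σ θ hσ hθ ψ c r hc hr β₁ β₂ β₃ h12 h23 hcubic C₁ C₂ C₃ hC₁ hC₂ hC₃ β hβ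
end

section
/- Let K > 0, let k* be the real number with e^{k*} = Kq/(σ²/2 + q + λ/(θ+1)²), and set c₁ = (β₂K + (1−β₂)e^{k*})/(β₂−β₁) and c₂ = (β₁K + (1−β₁)e^{k*})/(β₁−β₂). Then for all real x: Kq·Σ_{i=1}^3 (C_i/β_i)e^{β_i(x−k*)} − e^x = c₁e^{β₁(x−k*)} + c₂e^{β₂(x−k*)}. (This shows the two expressions for the value function U of the McKean optimal stopping problem on (k*,∞) agree.) -/
/-!
Clearing the denominator `θ + z` turns `(θ + z)(ψ(z) − q)` into a cubic polynomial; evaluating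
its factorisation `(σ²/2)(z − β₁)(z − β₂)(z − 1)` at `z = 0, 1, 2` gives Vieta's relations
`(σ²/2)β₁β₂ = θq` and `(σ²/2)(β₁ + β₂ + 1) = −(σ²θ/2 + μ)` together with `ψ(1) = q`, hence
`(σ²/2)(1 − β₁)(1 − β₂) = (θ + 1)ψ′(1)`, i.e. `e^{k*}(σ²/2)(1 − β₁)(1 − β₂) = Kq(θ + 1)`.
With these relations, `Kq·C₃ = e^{k*}` (which absorbs `−e^x`) and `Kq·C_i/β_i = c_i` for
`i = 1, 2`, so the two expressions agree term by term.
-/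

namespace McKean

section Roots

variable {s θ μ q lam β₁ β₂ : ℝ}

lemma cubic_eq_of_laplace {σ : ℝ} (ψ : ℝ → ℝ)
    (hψ : ∀ z : ℝ, z ≠ -θ → ψ z = σ^2/2 * z^2 + μ * z + lam * (θ/(θ+z) - 1))
    (hcubic : ∀ z : ℝ, z ≠ -θ →
      σ^2/2 * (z - β₁) * (z - β₂) * (z - 1) = (θ + z) * (ψ z - q))
    {z : ℝ} (hz : z ≠ -θ) :
    σ^2/2 * (z - β₁) * (z - β₂) * (z - 1)
      = (θ + z) * (σ^2/2 * z^2 + μ * z - q) - lam * z := by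
  have hθz : θ + z ≠ 0 := fun h => hz (by linarith)
  rw [hcubic z hz, hψ z hz]
  field_simp
  ring

lemma mul_roots_of_cubic_eq (hθ : θ ≠ 0)
    (h : ∀ z : ℝ, z ≠ -θ →
      s * (z - β₁) * (z - β₂) * (z - 1) = (θ + z) * (s * z^2 + μ * z - q) - lam * z) :
    s * (β₁ * β₂) = θ * q := by
  linear_combination -h 0 (by simpa [eq_comm] using hθ)

lemma sum_roots_of_cubic_eq (hθ : 0 < θ)
    (h : ∀ z : ℝ, z ≠ -θ →
      s * (z - β₁) * (z - β₂) * (z - 1) = (θ + z) * (s * z^2 + μ * z - q) - lam * z) :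
    s * (β₁ + β₂ + 1) = -(s * θ + μ) := by
  linear_combination
    (-1/2 : ℝ) * h 2 (by linarith) + h 1 (by linarith) - (1/2 : ℝ) * h 0 (by linarith)

lemma mul_one_sub_roots_of_cubic_eq (hθ : 0 < θ)
    (h : ∀ z : ℝ, z ≠ -θ →
      s * (z - β₁) * (z - β₂) * (z - 1) = (θ + z) * (s * z^2 + μ * z - q) - lam * z) :
    s * (1 - β₁) * (1 - β₂) = (s + q + lam/(θ+1)^2) * (θ + 1) := by
  have hprod := mul_roots_of_cubic_eq hθ.ne' h
  have hsum := sum_roots_of_cubic_eq hθ h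
  have hθ1 : θ + 1 ≠ 0 := by positivity
  field_simp
  linear_combination (θ + 1) * hprod - (θ + 1) * hsum - h 1 (by linarith)

end Roots

section Coefficients

variable {σ θ q K e β₁ β₂ : ℝ}

lemma K_mul_q_mul_coeff_one (hσ : σ ≠ 0) (h₁ : β₁ ≠ 1) (h₂ : β₂ ≠ 1)
    (hE : e * (σ^2/2 * (1 - β₁) * (1 - β₂)) = K * q * (θ + 1)) :
    K * q * (2 * (θ + 1) / (σ^2 * ((β₁ - 1) * (β₂ - 1)))) = e := by
  have h₁' : β₁ - 1 ≠ 0 := sub_ne_zero.mpr h₁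
  have h₂' : β₂ - 1 ≠ 0 := sub_ne_zero.mpr h₂
  field_simp
  linear_combination -2 * hE

lemma K_mul_q_mul_coeff_div_root (hσ : σ ≠ 0) (hβ₁ : β₁ ≠ 0) (h₁₂ : β₂ ≠ β₁) (h₁ : β₁ ≠ 1)
    (hprod : σ^2/2 * (β₁ * β₂) = θ * q)
    (hE : e * (σ^2/2 * (1 - β₁) * (1 - β₂)) = K * q * (θ + 1)) :
    K * q * (2 * (θ + β₁) / (σ^2 * ((β₂ - β₁) * (1 - β₁))) / β₁)
      = (β₂ * K + (1 - β₂) * e) / (β₂ - β₁) := by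
  have h₁₂' : β₂ - β₁ ≠ 0 := sub_ne_zero.mpr h₁₂
  have h₁' : 1 - β₁ ≠ 0 := sub_ne_zero.mpr h₁.symm
  field_simp
  linear_combination -2 * β₁ * hE - 2 * K * (1 - β₁) * hprod

end Coefficients

end McKean

open McKean in
theorem stmt_11_general
    (σ lam θ μ q : ℝ) (hσ : 0 < σ) (hθ : 0 < θ)
    (ψ : ℝ → ℝ)
    (hψ : ∀ z : ℝ, z ≠ -θ → ψ z = σ^2/2 * z^2 + μ * z + lam * (θ/(θ+z) - 1))
    (β₁ β₂ β₃ : ℝ) (h12 : β₁ < β₂) (h23 : β₂ < β₃) (h3 : β₃ = 1)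
    (hcubic : ∀ z : ℝ, z ≠ -θ →
      σ^2/2 * (z - β₁) * (z - β₂) * (z - 1) = (θ + z) * (ψ z - q))
    (C₁ C₂ C₃ : ℝ)
    (hC₁ : C₁ = 2 * (θ + β₁) / (σ^2 * ((β₂ - β₁) * (β₃ - β₁))))
    (hC₂ : C₂ = 2 * (θ + β₂) / (σ^2 * ((β₁ - β₂) * (β₃ - β₂))))
    (hC₃ : C₃ = 2 * (θ + β₃) / (σ^2 * ((β₁ - β₃) * (β₂ - β₃))))
    (K : ℝ)
    (kstar : ℝ) (hkstar : Real.exp kstar = K * q / (σ^2/2 + q + lam/(θ+1)^2))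
    (c₁ c₂ : ℝ)
    (hc₁ : c₁ = (β₂ * K + (1 - β₂) * Real.exp kstar) / (β₂ - β₁))
    (hc₂ : c₂ = (β₁ * K + (1 - β₁) * Real.exp kstar) / (β₁ - β₂)) :
    ∀ x : ℝ,
      K * q * (C₁ / β₁ * Real.exp (β₁ * (x - kstar))
          + C₂ / β₂ * Real.exp (β₂ * (x - kstar))
          + C₃ / β₃ * Real.exp (β₃ * (x - kstar))) - Real.exp x
        = c₁ * Real.exp (β₁ * (x - kstar)) + c₂ * Real.exp (β₂ * (x - kstar)) := by
  intro x
  subst h3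
  have hpoly := fun z (hz : z ≠ -θ) => cubic_eq_of_laplace ψ hψ hcubic hz
  have hprod := mul_roots_of_cubic_eq hθ.ne' hpoly
  obtain ⟨hKq, hD⟩ := div_ne_zero_iff.mp (hkstar ▸ (Real.exp_pos kstar).ne')
  have hE : Real.exp kstar * (σ^2/2 * (1 - β₁) * (1 - β₂)) = K * q * (θ + 1) := by
    rw [mul_one_sub_roots_of_cubic_eq hθ hpoly, hkstar, ← mul_assoc, div_mul_cancel₀ _ hD]
  obtain ⟨hβ₁, hβ₂⟩ := mul_ne_zero_iff.mp
    (right_ne_zero_of_mul (hprod ▸ mul_ne_zero hθ.ne' (right_ne_zero_of_mul hKq)))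
  have e₁ : K * q * (C₁ / β₁) = c₁ := by
    rw [hC₁, hc₁]
    exact K_mul_q_mul_coeff_div_root hσ.ne' hβ₁ h12.ne' (h12.trans h23).ne hprod hE
  have e₂ : K * q * (C₂ / β₂) = c₂ := by
    rw [hC₂, hc₂]
    exact K_mul_q_mul_coeff_div_root hσ.ne' hβ₂ h12.ne h23.ne (by linear_combination hprod)
      (by linear_combination hE)
  have e₃ : K * q * C₃ = Real.exp kstar := by
    rw [hC₃]
    exact K_mul_q_mul_coeff_one hσ.ne' (h12.trans h23).ne h23.ne hE
  have hx : Real.exp x = Real.exp kstar * Real.exp (1 * (x - kstar)) := by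
    rw [← Real.exp_add]
    ring_nf
  rw [hx]
  linear_combination Real.exp (β₁ * (x - kstar)) * e₁ + Real.exp (β₂ * (x - kstar)) * e₂
    + Real.exp (1 * (x - kstar)) * e₃

/-- The two expressions for the value function `U` of the McKean optimal
stopping problem agree on `(k*,∞)`:
`Kq·Σ (C_i/β_i)e^{β_i(x−k*)} − e^x = c₁e^{β₁(x−k*)} + c₂e^{β₂(x−k*)}`. -/
theorem stmt_11
    (σ lam θ μ q : ℝ) (hσ : 0 < σ) (hlam : 0 < lam) (hθ : 0 < θ) (hq : 0 < q)
    (hμ : μ = q - σ^2/2 + lam/(θ+1))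
    (ψ : ℝ → ℝ)
    (hψ : ∀ z : ℝ, z ≠ -θ → ψ z = σ^2/2 * z^2 + μ * z + lam * (θ/(θ+z) - 1))
    (β₁ β₂ β₃ : ℝ) (h12 : β₁ < β₂) (h23 : β₂ < β₃) (h3 : β₃ = 1)
    (hcubic : ∀ z : ℝ, z ≠ -θ →
      σ^2/2 * (z - β₁) * (z - β₂) * (z - 1) = (θ + z) * (ψ z - q))
    (C₁ C₂ C₃ : ℝ)
    (hC₁ : C₁ = 2 * (θ + β₁) / (σ^2 * ((β₂ - β₁) * (β₃ - β₁))))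
    (hC₂ : C₂ = 2 * (θ + β₂) / (σ^2 * ((β₁ - β₂) * (β₃ - β₂))))
    (hC₃ : C₃ = 2 * (θ + β₃) / (σ^2 * ((β₁ - β₃) * (β₂ - β₃))))
    (K : ℝ) (hK : 0 < K)
    (kstar : ℝ) (hkstar : Real.exp kstar = K * q / (σ^2/2 + q + lam/(θ+1)^2))
    (c₁ c₂ : ℝ)
    (hc₁ : c₁ = (β₂ * K + (1 - β₂) * Real.exp kstar) / (β₂ - β₁))
    (hc₂ : c₂ = (β₁ * K + (1 - β₁) * Real.exp kstar) / (β₁ - β₂)) :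
    ∀ x : ℝ,
      K * q * (C₁ / β₁ * Real.exp (β₁ * (x - kstar))
          + C₂ / β₂ * Real.exp (β₂ * (x - kstar))
          + C₃ / β₃ * Real.exp (β₃ * (x - kstar))) - Real.exp x
        = c₁ * Real.exp (β₁ * (x - kstar)) + c₂ * Real.exp (β₂ * (x - kstar)) :=
  stmt_11_general σ lam θ μ q hσ hθ ψ hψ β₁ β₂ β₃ h12 h23 h3 hcubic C₁ C₂ C₃ hC₁ hC₂ hC₃ K kstar
    hkstar c₁ c₂ hc₁ hc₂
end

section
/- Assume moreover δ/K = q·Σ_{i=1}^3 (C_i/β_i)K^{β_i}e^{−β_i x*} − 1. Then a real y > log K satisfies the equation ∫_{−∞}^0 ∫_{−∞}^{t} (w_δ(t+y) − δ)·e^{−(t−u)}·λθe^{θu} du dt = δq if and only if e^{θy} = (λθK^{θ+1}/((θ+1)qδ))·( q·Σ_{i=1}^3 (C_i K^{β_i}/(β_i(θ+β_i)))·e^{−β_i x*} − 1/(θ+1) − δ/(θK) ). (This is the explicit formula for the optimal level y* of the minimiser in the McKean stochastic game for the jump-diffusion.) -/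
/-!
The inner integral against the exponential kernel is explicit,
`∫_{u<t} e^{-(t-u)} λθ e^{θu} du = λθ/(θ+1) e^{θt}`, so after the shift `x = t + y` the left-hand
side is `λθ/(θ+1) e^{-θy} ∫_{x < log K} (w_δ(x) - δ) e^{θx} dx`, the integrand vanishing on
`[log K, y)`. On `(-∞, x*]` and on `(x*, log K)` the payoff is a combination of exponentials, so
this integral is elementary. Its boundary terms at `x*` cancel because
`q Σ C_i / (β_i (θ + β_i)) = 1/θ`: by partial fractions the sum is `2 / (σ² β₁ β₂ β₃)`, and
`σ² β₁ β₂ / 2 = θ q` is the factorization evaluated at `z = 0`. What remains is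
`K^{θ+1}` times the bracket of the stated formula.
-/

open MeasureTheory Set Real

section Integrals

lemma integral_exp_mul {c : ℝ} (hc : c ≠ 0) (a b : ℝ) :
    ∫ x in a..b, exp (c * x) = (exp (c * b) - exp (c * a)) / c := by
  simp only [intervalIntegral.integral_comp_mul_left (fun x => exp x) hc, integral_exp, smul_eq_mul]
  field_simp

lemma integral_Iio_exp_mul {c : ℝ} (hc : 0 < c) (a : ℝ) :
    ∫ x in Iio a, exp (c * x) = exp (c * a) / c := by
  rw [← integral_Iic_eq_integral_Iio, integral_exp_mul_Iic hc]

lemma setIntegral_Iio_comp_add_right {E : Type*} [NormedAddCommGroup E] [NormedSpace ℝ E]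
    (f : ℝ → E) (a y : ℝ) :
    ∫ t in Iio a, f (t + y) = ∫ x in Iio (a + y), f x := by
  simpa using (measurePreserving_add_right volume y).setIntegral_preimage_emb
    (measurableEmbedding_addRight y) f (Iio (a + y))

lemma integral_Iic_eq_add_of_eqOn {f g₁ g₂ : ℝ → ℝ} {s L : ℝ} (hsL : s ≤ L)
    (h₁ : EqOn f g₁ (Iic s)) (hg₁ : IntegrableOn g₁ (Iic s))
    (h₂ : EqOn f g₂ (Ioo s L)) (hg₂ : Continuous g₂) :
    ∫ x in Iic L, f x = (∫ x in Iic s, g₁ x) + ∫ x in s..L, g₂ x := by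
  have hf₁ : IntegrableOn f (Iic s) := hg₁.congr_fun h₁.symm measurableSet_Iic
  have hf₂ : IntegrableOn f (Ioc s L) := by
    rw [integrableOn_Ioc_iff_integrableOn_Ioo]
    exact hg₂.integrableOn_Icc.mono_set Ioo_subset_Icc_self |>.congr_fun h₂.symm measurableSet_Ioo
  have hsplit := intervalIntegral.integral_Iic_sub_Iic hf₁
    (Iic_union_Ioc_eq_Iic hsL ▸ hf₁.union hf₂)
  rw [intervalIntegral.integral_congr_Ioo_of_le hsL h₂,
    setIntegral_congr_fun measurableSet_Iic h₁] at hsplit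
  exact eq_add_of_sub_eq' hsplit

lemma integral_Iio_integral_Iio_exp_kernel (f : ℝ → ℝ) {θ : ℝ} (hθ : 0 < θ + 1) (c y : ℝ) :
    ∫ t in Iio 0, ∫ u in Iio t, f (t + y) * exp (-(t - u)) * (c * exp (θ * u))
      = c / (θ + 1) * exp (-(θ * y)) * ∫ x in Iio y, f x * exp (θ * x) := by
  have hinner : ∀ t, ∫ u in Iio t, f (t + y) * exp (-(t - u)) * (c * exp (θ * u))
      = c / (θ + 1) * exp (-(θ * y)) * (f (t + y) * exp (θ * (t + y))) := by
    intro t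
    have hkernel : ∀ u, f (t + y) * exp (-(t - u)) * (c * exp (θ * u))
        = f (t + y) * c * exp (-t) * exp ((θ + 1) * u) := by
      intro u
      have hexp : exp (-(t - u)) * exp (θ * u) = exp (-t) * exp ((θ + 1) * u) := by
        rw [← exp_add, ← exp_add]; ring_nf
      linear_combination f (t + y) * c * hexp
    have hexp : exp (-t) * exp ((θ + 1) * t) = exp (-(θ * y)) * exp (θ * (t + y)) := by
      rw [← exp_add, ← exp_add]; ring_nf
    simp_rw [hkernel, integral_const_mul, integral_Iio_exp_mul hθ]
    rw [← mul_div_assoc, mul_assoc (f (t + y) * c), hexp]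
    ring
  simp_rw [hinner, integral_const_mul, setIntegral_Iio_comp_add_right (fun x => f x * exp (θ * x)),
    zero_add]

lemma integral_Iic_sub_mul_exp_of_piecewise {w : ℝ → ℝ} {θ δ K s L a₁ a₂ a₃ b₁ b₂ b₃ : ℝ}
    (hθ : 0 < θ) (hb₁ : θ + b₁ ≠ 0) (hb₂ : θ + b₂ ≠ 0) (hb₃ : θ + b₃ ≠ 0) (hsL : s ≤ L)
    (hw₁ : ∀ x ≤ s, w x = K - exp x)
    (hw₂ : ∀ x, s < x → x < L →
      w x = a₁ * exp (b₁ * x) + a₂ * exp (b₂ * x) + a₃ * exp (b₃ * x) - exp x) :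
    ∫ x in Iic L, (w x - δ) * exp (θ * x) =
      (K * exp (θ * s) / θ - (a₁ * exp ((θ + b₁) * s) / (θ + b₁)
        + a₂ * exp ((θ + b₂) * s) / (θ + b₂) + a₃ * exp ((θ + b₃) * s) / (θ + b₃)))
      + (a₁ * exp ((θ + b₁) * L) / (θ + b₁) + a₂ * exp ((θ + b₂) * L) / (θ + b₂)
        + a₃ * exp ((θ + b₃) * L) / (θ + b₃) - exp ((θ + 1) * L) / (θ + 1)
        - δ * exp (θ * L) / θ) := by
  have hθ₁ : 0 < θ + 1 := by linarith
  have hexp : ∀ b x, exp (b * x) * exp (θ * x) = exp ((θ + b) * x) := fun b x => by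
    rw [← exp_add]; ring_nf
  rw [integral_Iic_eq_add_of_eqOn (g₁ := fun x => (K - δ) * exp (θ * x) - exp ((θ + 1) * x))
    (g₂ := fun x => a₁ * exp ((θ + b₁) * x) + a₂ * exp ((θ + b₂) * x) + a₃ * exp ((θ + b₃) * x)
      - exp ((θ + 1) * x) - δ * exp (θ * x)) hsL ?eq₁ ?int₁ ?eq₂ (by fun_prop)]
  case eq₁ =>
    intro x hx
    simp only [hw₁ x hx, ← hexp 1 x, one_mul]
    ring
  case int₁ =>
    exact ((integrableOn_exp_mul_Iic hθ s).const_mul _).sub (integrableOn_exp_mul_Iic hθ₁ s)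
  case eq₂ =>
    intro x hx
    simp only [hw₂ x hx.1 hx.2, ← hexp, one_mul]
    ring
  rw [integral_sub ((integrableOn_exp_mul_Iic hθ s).const_mul _) (integrableOn_exp_mul_Iic hθ₁ s),
    integral_const_mul, integral_exp_mul_Iic hθ, integral_exp_mul_Iic hθ₁,
    intervalIntegral.integral_sub, intervalIntegral.integral_sub, intervalIntegral.integral_add,
    intervalIntegral.integral_add]
  · simp only [intervalIntegral.integral_const_mul, integral_exp_mul hb₁, integral_exp_mul hb₂,
      integral_exp_mul hb₃, integral_exp_mul hθ₁.ne', integral_exp_mul hθ.ne']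
    ring
  all_goals apply Continuous.intervalIntegrable; fun_prop

end Integrals

section Roots

variable {σ lam θ μ q β₁ β₂ : ℝ} {ψ : ℝ → ℝ}

/- `(θ + z) (ψ z - q)` has a removable singularity at `-θ`; both sides are polynomials. -/
lemma cubic_eq_of_forall_ne
    (hψ : ∀ z : ℝ, z ≠ -θ → ψ z = σ^2/2 * z^2 + μ * z + lam * (θ/(θ+z) - 1))
    (hcubic : ∀ z : ℝ, z ≠ -θ →
      σ^2/2 * (z - β₁) * (z - β₂) * (z - 1) = (θ + z) * (ψ z - q)) (z : ℝ) :
    σ^2/2 * (z - β₁) * (z - β₂) * (z - 1)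
      = (θ + z) * (σ^2/2 * z^2 + μ * z - (lam + q)) + lam * θ := by
  refine congrFun (Continuous.ext_on (dense_compl_singleton (-θ))
    (f := fun z => σ^2/2 * (z - β₁) * (z - β₂) * (z - 1))
    (g := fun z => (θ + z) * (σ^2/2 * z^2 + μ * z - (lam + q)) + lam * θ)
    (by fun_prop) (by fun_prop) fun z (hz : z ≠ -θ) => ?_) z
  have hθz : θ + z ≠ 0 := fun h => hz (by linarith)
  simp only [hcubic z hz, hψ z hz]
  field_simp
  ring

lemma mul_roots_eq
    (hψ : ∀ z : ℝ, z ≠ -θ → ψ z = σ^2/2 * z^2 + μ * z + lam * (θ/(θ+z) - 1))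
    (hcubic : ∀ z : ℝ, z ≠ -θ →
      σ^2/2 * (z - β₁) * (z - β₂) * (z - 1) = (θ + z) * (ψ z - q)) :
    σ^2/2 * (β₁ * β₂) = θ * q := by
  linear_combination -cubic_eq_of_forall_ne hψ hcubic 0

lemma mul_shifted_roots_eq
    (hψ : ∀ z : ℝ, z ≠ -θ → ψ z = σ^2/2 * z^2 + μ * z + lam * (θ/(θ+z) - 1))
    (hcubic : ∀ z : ℝ, z ≠ -θ →
      σ^2/2 * (z - β₁) * (z - β₂) * (z - 1) = (θ + z) * (ψ z - q)) :
    σ^2/2 * ((θ + β₁) * (θ + β₂)) * (θ + 1) = -(lam * θ) := by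
  linear_combination -cubic_eq_of_forall_ne hψ hcubic (-θ)

end Roots

lemma sum_coeff_div_eq {σ θ β₁ β₂ β₃ C₁ C₂ C₃ : ℝ} (hσ : σ ≠ 0)
    (h12 : β₁ ≠ β₂) (h13 : β₁ ≠ β₃) (h23 : β₂ ≠ β₃)
    (hβ₁ : β₁ ≠ 0) (hβ₂ : β₂ ≠ 0) (hβ₃ : β₃ ≠ 0)
    (hθβ₁ : θ + β₁ ≠ 0) (hθβ₂ : θ + β₂ ≠ 0) (hθβ₃ : θ + β₃ ≠ 0)
    (hC₁ : C₁ = 2 * (θ + β₁) / (σ^2 * ((β₂ - β₁) * (β₃ - β₁))))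
    (hC₂ : C₂ = 2 * (θ + β₂) / (σ^2 * ((β₁ - β₂) * (β₃ - β₂))))
    (hC₃ : C₃ = 2 * (θ + β₃) / (σ^2 * ((β₁ - β₃) * (β₂ - β₃)))) :
    C₁ / β₁ / (θ + β₁) + C₂ / β₂ / (θ + β₂) + C₃ / β₃ / (θ + β₃)
      = 2 / (σ^2 * (β₁ * β₂ * β₃)) := by
  have := sub_ne_zero.2 h12
  have := sub_ne_zero.2 h13
  have := sub_ne_zero.2 h23
  have := sub_ne_zero.2 h12.symm
  have := sub_ne_zero.2 h13.symm
  have := sub_ne_zero.2 h23.symm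
  subst hC₁ hC₂ hC₃
  field_simp
  ring

lemma integral_Iic_log_payoff {w : ℝ → ℝ} {θ q δ K xstar β₁ β₂ β₃ C₁ C₂ C₃ : ℝ}
    (hθ : 0 < θ) (hK : 0 < K) (hxstar : xstar < log K)
    (hβ₁ : β₁ ≠ 0) (hβ₂ : β₂ ≠ 0) (hβ₃ : β₃ ≠ 0)
    (hθβ₁ : θ + β₁ ≠ 0) (hθβ₂ : θ + β₂ ≠ 0) (hθβ₃ : θ + β₃ ≠ 0)
    (hcoeff : q * (C₁ / β₁ / (θ + β₁) + C₂ / β₂ / (θ + β₂) + C₃ / β₃ / (θ + β₃)) = 1 / θ)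
    (hw1 : ∀ x : ℝ, x ≤ xstar → w x = K - exp x)
    (hw2 : ∀ x : ℝ, xstar < x → x < log K →
      w x = K * q * (C₁ / β₁ * exp (β₁ * (x - xstar)) + C₂ / β₂ * exp (β₂ * (x - xstar))
        + C₃ / β₃ * exp (β₃ * (x - xstar))) - exp x) :
    ∫ x in Iic (log K), (w x - δ) * exp (θ * x) = K ^ (θ + 1) *
      (q * (C₁ * K ^ β₁ / (β₁ * (θ + β₁)) * exp (-β₁ * xstar)
          + C₂ * K ^ β₂ / (β₂ * (θ + β₂)) * exp (-β₂ * xstar)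
          + C₃ * K ^ β₃ / (β₃ * (θ + β₃)) * exp (-β₃ * xstar))
        - 1 / (θ + 1) - δ / (θ * K)) := by
  set a : ℝ → ℝ → ℝ := fun C β => K * q * (C / β) * exp (-(β * xstar))
  have hw₂ : ∀ x, xstar < x → x < log K →
      w x = a C₁ β₁ * exp (β₁ * x) + a C₂ β₂ * exp (β₂ * x) + a C₃ β₃ * exp (β₃ * x) - exp x := by
    intro x h₁ h₂
    simp only [hw2 x h₁ h₂, a, mul_sub, exp_sub, exp_neg]
    ring
  have hcancel : K * exp (θ * xstar) / θ - (a C₁ β₁ * exp ((θ + β₁) * xstar) / (θ + β₁)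
      + a C₂ β₂ * exp ((θ + β₂) * xstar) / (θ + β₂)
      + a C₃ β₃ * exp ((θ + β₃) * xstar) / (θ + β₃)) = 0 := by
    have hexp : ∀ C β, a C β * exp ((θ + β) * xstar) = K * q * (C / β) * exp (θ * xstar) := by
      intro C β
      simp only [a, mul_assoc, ← exp_add]
      ring_nf
    rw [hexp, hexp, hexp]
    linear_combination (-K * exp (θ * xstar)) * hcoeff
  rw [integral_Iic_sub_mul_exp_of_piecewise hθ hθβ₁ hθβ₂ hθβ₃ hxstar.le hw1 hw₂, hcancel, zero_add]
  set L := log K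
  have hK' : K = exp L := (exp_log hK).symm
  simp only [a, hK', ← exp_mul, add_mul, mul_add, exp_add, neg_mul, exp_neg, one_mul, mul_one]
  simp only [mul_comm L]
  field_simp

theorem stmt_15_general
    (σ lam θ μ q : ℝ) (hσ : 0 < σ) (hlam : 0 < lam) (hθ : 0 < θ) (hq : 0 < q)
    (ψ : ℝ → ℝ)
    (hψ : ∀ z : ℝ, z ≠ -θ → ψ z = σ^2/2 * z^2 + μ * z + lam * (θ/(θ+z) - 1))
    (β₁ β₂ β₃ : ℝ) (h12 : β₁ < β₂) (h23 : β₂ < β₃) (h3 : β₃ = 1)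
    (hcubic : ∀ z : ℝ, z ≠ -θ →
      σ^2/2 * (z - β₁) * (z - β₂) * (z - 1) = (θ + z) * (ψ z - q))
    (C₁ C₂ C₃ : ℝ)
    (hC₁ : C₁ = 2 * (θ + β₁) / (σ^2 * ((β₂ - β₁) * (β₃ - β₁))))
    (hC₂ : C₂ = 2 * (θ + β₂) / (σ^2 * ((β₁ - β₂) * (β₃ - β₂))))
    (hC₃ : C₃ = 2 * (θ + β₃) / (σ^2 * ((β₁ - β₃) * (β₂ - β₃))))
    (K : ℝ) (hK : 0 < K) (xstar : ℝ) (hxstar : xstar < Real.log K)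
    (δ : ℝ) (hδ : 0 < δ)
    (w : ℝ → ℝ)
    (hw1 : ∀ x : ℝ, x ≤ xstar → w x = K - Real.exp x)
    (hw2 : ∀ x : ℝ, xstar < x → x < Real.log K →
      w x = K * q * (C₁ / β₁ * Real.exp (β₁ * (x - xstar))
          + C₂ / β₂ * Real.exp (β₂ * (x - xstar))
          + C₃ / β₃ * Real.exp (β₃ * (x - xstar))) - Real.exp x)
    (hw3 : ∀ x : ℝ, Real.log K ≤ x → w x = δ) :
    ∀ y : ℝ, Real.log K < y →
      ((∫ t in Set.Iio (0:ℝ), ∫ u in Set.Iio t,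
          (w (t + y) - δ) * Real.exp (-(t - u)) * (lam * θ * Real.exp (θ * u)))
        = δ * q
      ↔ Real.exp (θ * y)
          = (lam * θ * K ^ (θ + 1) / ((θ + 1) * q * δ)) *
              (q * (C₁ * K ^ β₁ / (β₁ * (θ + β₁)) * Real.exp (-β₁ * xstar)
                  + C₂ * K ^ β₂ / (β₂ * (θ + β₂)) * Real.exp (-β₂ * xstar)
                  + C₃ * K ^ β₃ / (β₃ * (θ + β₃)) * Real.exp (-β₃ * xstar))
                - 1 / (θ + 1) - δ / (θ * K))) := by
  intro y hy
  have hroots := mul_roots_eq hψ hcubic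
  obtain ⟨hβ₁, hβ₂⟩ := mul_ne_zero_iff.1 (right_ne_zero_of_mul (hroots.trans_ne (by positivity)))
  obtain ⟨hθβ₁, hθβ₂⟩ := mul_ne_zero_iff.1 (right_ne_zero_of_mul (left_ne_zero_of_mul
    ((mul_shifted_roots_eq hψ hcubic).trans_ne (by simp [hlam.ne', hθ.ne']))))
  subst h3
  have hcoeff : q * (C₁ / β₁ / (θ + β₁) + C₂ / β₂ / (θ + β₂) + C₃ / 1 / (θ + 1)) = 1 / θ := by
    rw [sum_coeff_div_eq hσ.ne' h12.ne (h12.trans h23).ne h23.ne hβ₁ hβ₂ one_ne_zero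
      hθβ₁ hθβ₂ (by positivity) hC₁ hC₂ hC₃, mul_one,
      show σ^2 * (β₁ * β₂) = 2 * (θ * q) by linear_combination 2 * hroots]
    field_simp
  rw [integral_Iio_integral_Iio_exp_kernel (fun x => w x - δ) (by positivity),
    setIntegral_eq_of_subset_of_forall_sdiff_eq_zero measurableSet_Iio (Iic_subset_Iio.2 hy)
      fun x hx => by rw [hw3 x (not_le.1 hx.2).le, sub_self, zero_mul],
    integral_Iic_log_payoff hθ hK hxstar hβ₁ hβ₂ one_ne_zero hθβ₁ hθβ₂ (by positivity) hcoeff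
      hw1 hw2, exp_neg]
  have := exp_pos (θ * y)
  constructor <;> intro h <;> field_simp at h ⊢ <;> linarith

/-- Assuming the continuous-fit equation for `x*`, a real `y > log K` solves
the integral equation for the minimiser's optimal level iff `e^{θy}` equals the
stated explicit expression. -/
theorem stmt_15
    (σ lam θ μ q : ℝ) (hσ : 0 < σ) (hlam : 0 < lam) (hθ : 0 < θ) (hq : 0 < q)
    (hμ : μ = q - σ^2/2 + lam/(θ+1))
    (ψ : ℝ → ℝ)
    (hψ : ∀ z : ℝ, z ≠ -θ → ψ z = σ^2/2 * z^2 + μ * z + lam * (θ/(θ+z) - 1))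
    (β₁ β₂ β₃ : ℝ) (h12 : β₁ < β₂) (h23 : β₂ < β₃) (h3 : β₃ = 1)
    (hcubic : ∀ z : ℝ, z ≠ -θ →
      σ^2/2 * (z - β₁) * (z - β₂) * (z - 1) = (θ + z) * (ψ z - q))
    (C₁ C₂ C₃ : ℝ)
    (hC₁ : C₁ = 2 * (θ + β₁) / (σ^2 * ((β₂ - β₁) * (β₃ - β₁))))
    (hC₂ : C₂ = 2 * (θ + β₂) / (σ^2 * ((β₁ - β₂) * (β₃ - β₂))))
    (hC₃ : C₃ = 2 * (θ + β₃) / (σ^2 * ((β₁ - β₃) * (β₂ - β₃))))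
    (K : ℝ) (hK : 0 < K) (xstar : ℝ) (hxstar : xstar < Real.log K)
    (δ : ℝ) (hδ : 0 < δ)
    (w : ℝ → ℝ)
    (hw1 : ∀ x : ℝ, x ≤ xstar → w x = K - Real.exp x)
    (hw2 : ∀ x : ℝ, xstar < x → x < Real.log K →
      w x = K * q * (C₁ / β₁ * Real.exp (β₁ * (x - xstar))
          + C₂ / β₂ * Real.exp (β₂ * (x - xstar))
          + C₃ / β₃ * Real.exp (β₃ * (x - xstar))) - Real.exp x)
    (hw3 : ∀ x : ℝ, Real.log K ≤ x → w x = δ)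
    (hxeq : δ / K = q * (C₁ / β₁ * K ^ β₁ * Real.exp (-β₁ * xstar)
        + C₂ / β₂ * K ^ β₂ * Real.exp (-β₂ * xstar)
        + C₃ / β₃ * K ^ β₃ * Real.exp (-β₃ * xstar)) - 1) :
    ∀ y : ℝ, Real.log K < y →
      ((∫ t in Set.Iio (0:ℝ), ∫ u in Set.Iio t,
          (w (t + y) - δ) * Real.exp (-(t - u)) * (lam * θ * Real.exp (θ * u)))
        = δ * q
      ↔ Real.exp (θ * y)
          = (lam * θ * K ^ (θ + 1) / ((θ + 1) * q * δ)) *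
              (q * (C₁ * K ^ β₁ / (β₁ * (θ + β₁)) * Real.exp (-β₁ * xstar)
                  + C₂ * K ^ β₂ / (β₂ * (θ + β₂)) * Real.exp (-β₂ * xstar)
                  + C₃ * K ^ β₃ / (β₃ * (θ + β₃)) * Real.exp (-β₃ * xstar))
                - 1 / (θ + 1) - δ / (θ * K))) :=
  stmt_15_general σ lam θ μ q hσ hlam hθ hq ψ hψ β₁ β₂ β₃ h12 h23 h3 hcubic C₁ C₂ C₃ hC₁ hC₂ hC₃ K
    hK xstar hxstar δ hδ w hw1 hw2 hw3
end
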